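/- arXiv:2201.00078 — 3 statements merged into one kernel-verified Lean document; each statement's English description precedes it below -/
import Mathlib

section
/- Let G be a finite simple connected cubic graph and S a set of vertices. If S is a P3-hull set (i.e., iterating the rule that a vertex becomes infected when at least two of its neighbors are infected, starting from S, eventually infects all vertices), then the induced subgraph on the complement of S is acyclic. -/
open SimpleGraph

def infectStep {V : Type*} (G : SimpleGraph V) (S : Set V) : Set V :=
  S ∪ {v | ∃ a b, a ≠ b ∧ a ∈ S ∧ b ∈ S ∧ G.Adj v a ∧ G.Adj v b}

def infectIter {V : Type*} (G : SimpleGraph V) (S : Set V) : ℕ → Set V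
  | 0 => S
  | p + 1 => infectStep G (infectIter G S p)

def IsHullSet {V : Type*} (G : SimpleGraph V) (S : Set V) : Prop :=
  ∃ p, infectIter G S p = Set.univ

noncomputable def hullNumber {V : Type*} (G : SimpleGraph V) : ℕ :=
  sInf {m | ∃ S : Set V, S.ncard = m ∧ IsHullSet G S}

noncomputable def infectTime {V : Type*} (G : SimpleGraph V) (S : Set V) : ℕ :=
  sInf {p | infectIter G S p = Set.univ}

def IsCubic {V : Type*} (G : SimpleGraph V) : Prop :=
  ∀ v, {w | G.Adj v w}.ncard = 3

def IsDecyclingSet {V : Type*} (G : SimpleGraph V) (S : Set V) : Prop :=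
  (G.induce Sᶜ).IsAcyclic

noncomputable def decyclingNumber {V : Type*} (G : SimpleGraph V) : ℕ :=
  sInf {m | ∃ S : Set V, S.ncard = m ∧ IsDecyclingSet G S}

def pHull {V : Type*} (G : SimpleGraph V) (S : Set V) : Set V :=
  ⋃ p, infectIter G S p

noncomputable def graphDiam {V : Type*} (G : SimpleGraph V) : ℕ :=
  sSup {d | ∃ a b, d = G.dist a b}

noncomputable def maxCompDiam {V : Type*} (G : SimpleGraph V) : ℕ :=
  sSup {d | ∃ c : G.ConnectedComponent, d = graphDiam (G.induce c.supp)}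

def genPetersen (n k : ℕ) [NeZero n] : SimpleGraph (Fin n ⊕ Fin n) :=
  SimpleGraph.fromRel fun x y =>
    match x, y with
    | Sum.inl i, Sum.inl j => j = i + 1
    | Sum.inl i, Sum.inr j => i = j
    | Sum.inr i, Sum.inr j => j = i + Fin.ofNat n k
    | _, _ => False

/-! A vertex on a cycle of `G - S` has two neighbours on the cycle, so in a cubic graph at most
one neighbour off it. Infection needs two infected neighbours and the cycle avoids `S`, so by
induction no vertex of the cycle is ever infected, and `S` cannot be a hull set. -/

namespace SimpleGraph

variable {V : Type*} {G : SimpleGraph V}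

theorem disjoint_infectIter {S T : Set V} (hST : Disjoint S T)
    (hT : ∀ x ∈ T, (G.neighborSet x \ T).encard ≤ 1) (p : ℕ) :
    Disjoint (infectIter G S p) T := by
  induction p with
  | zero => exact hST
  | succ p ih =>
    refine Disjoint.union_left ih (Set.disjoint_left.mpr ?_)
    rintro x ⟨a, b, hab, ha, hb, hxa, hxb⟩ hx
    have hout : (G.neighborSet x \ T).Subsingleton :=
      Set.encard_le_one_iff_subsingleton.mp (hT x hx)
    exact hab (hout ⟨hxa, Set.disjoint_left.mp ih ha⟩ ⟨hxb, Set.disjoint_left.mp ih hb⟩)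

theorem not_isHullSet_of_disjoint {S T : Set V} (hST : Disjoint S T) (hne : T.Nonempty)
    (hT : ∀ x ∈ T, (G.neighborSet x \ T).encard ≤ 1) : ¬ IsHullSet G S := by
  rintro ⟨p, hp⟩
  have hdisj := disjoint_infectIter hST hT p
  rw [hp, Set.univ_disjoint] at hdisj
  exact hne.ne_empty hdisj

theorem encard_neighborSet_diff_le_one {x : V} {T : Set V}
    (hdeg : (G.neighborSet x).encard ≤ 3) (hT : 2 ≤ (G.neighborSet x ∩ T).encard) :
    (G.neighborSet x \ T).encard ≤ 1 := by
  rw [← Set.encard_sdiff_add_encard_inter (G.neighborSet x) T] at hdeg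
  have h : (G.neighborSet x \ T).encard + 2 ≤ 3 := (add_le_add_right hT _).trans hdeg
  have hfin : (G.neighborSet x \ T).encard ≠ ⊤ := by rintro h'; simp [h'] at h
  lift (G.neighborSet x \ T).encard to ℕ using hfin with a
  norm_cast at h ⊢
  omega

theorem Walk.IsCycle.two_le_encard_neighborSet_inter_support {u v : V} {c : G.Walk u u}
    (hc : c.IsCycle) (hv : v ∈ c.support) :
    2 ≤ (G.neighborSet v ∩ {w | w ∈ c.support}).encard := by
  have hsub : c.toSubgraph.neighborSet v ⊆ G.neighborSet v ∩ {w | w ∈ c.support} :=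
    fun w hw => ⟨c.toSubgraph.adj_sub hw, c.verts_toSubgraph ▸ c.toSubgraph.edge_vert hw.symm⟩
  have htwo := hc.ncard_neighborSet_toSubgraph_eq_two hv
  calc (2 : ℕ∞) = (c.toSubgraph.neighborSet v).encard := by
        rw [← (Set.finite_of_ncard_ne_zero (by omega)).cast_ncard_eq, htwo]; rfl
    _ ≤ _ := Set.encard_le_encard hsub

theorem IsCubic.encard_neighborSet (hG : IsCubic G) (v : V) : (G.neighborSet v).encard = 3 := by
  have hfin : (G.neighborSet v).Finite :=
    Set.finite_of_ncard_ne_zero (by simp [neighborSet, hG v])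
  rw [← hfin.cast_ncard_eq]
  exact congrArg _ (hG v)

end SimpleGraph

theorem stmt0_general {V : Type*} (G : SimpleGraph V)
    (hcub : IsCubic G) (S : Set V)
    (hS : IsHullSet G S) : (G.induce Sᶜ).IsAcyclic := by
  intro v c hc
  let c' := c.map (Embedding.induce Sᶜ).toHom
  have hc' : c'.IsCycle := hc.map Subtype.val_injective
  have hdisj : Disjoint S {w | w ∈ c'.support} := Set.disjoint_right.mpr fun w hw => by
    simp only [Set.mem_ofPred_eq, c', Walk.support_map, List.mem_map] at hw
    obtain ⟨y, -, rfl⟩ := hw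
    exact y.2
  exact not_isHullSet_of_disjoint hdisj ⟨v, c'.start_mem_support⟩
    (fun x hx => encard_neighborSet_diff_le_one (hcub.encard_neighborSet x).le
      (hc'.two_le_encard_neighborSet_inter_support hx)) hS

theorem stmt0 {V : Type*} [Fintype V] (G : SimpleGraph V)
    (hcub : IsCubic G) (hconn : G.Connected) (S : Set V)
    (hS : IsHullSet G S) : (G.induce Sᶜ).IsAcyclic :=
  stmt0_general G hcub S hS
end

section
/- For a finite simple connected cubic graph G, the P3-hull number of G equals the decycling number of G, i.e., the minimum cardinality of a P3-hull set equals the minimum cardinality of a vertex set whose removal leaves an acyclic graph. -/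
/-!
In a cubic graph a vertex has two neighbours in a set `U` exactly when it does not have two
neighbours outside `U`. Hence the vertices of a cycle avoiding `S` each have at most one neighbour
off the cycle and are never infected, so a hull set meets every cycle. Conversely, if `G - S` is a
forest, the uninfected vertices induce a forest, which has a vertex with at most one uninfected
neighbour; that vertex has two infected neighbours, so the infection grows until it covers `V`.
Thus hull sets and decycling sets coincide, and so do their minimum sizes.
-/

open SimpleGraph

namespace SimpleGraph

variable {V : Type*} {G : SimpleGraph V}

def HasTwoNeighborsIn (G : SimpleGraph V) (v : V) (U : Set V) : Prop :=
  ∃ a b, a ≠ b ∧ a ∈ U ∧ b ∈ U ∧ G.Adj v a ∧ G.Adj v b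

lemma HasTwoNeighborsIn.mono {v : V} {U U' : Set V} (h : G.HasTwoNeighborsIn v U)
    (hUU' : U ⊆ U') : G.HasTwoNeighborsIn v U' := by
  obtain ⟨a, b, hab, ha, hb, hva, hvb⟩ := h
  exact ⟨a, b, hab, hUU' ha, hUU' hb, hva, hvb⟩

lemma hasTwoNeighborsIn_iff_one_lt_ncard [Finite V] {v : V} {U : Set V} :
    G.HasTwoNeighborsIn v U ↔ 1 < ({w | G.Adj v w} ∩ U).ncard := by
  rw [Set.one_lt_ncard_iff]
  constructor
  · rintro ⟨a, b, hab, ha, hb, hva, hvb⟩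
    exact ⟨a, b, ⟨hva, ha⟩, ⟨hvb, hb⟩, hab⟩
  · rintro ⟨a, b, ⟨hva, ha⟩, ⟨hvb, hb⟩, hab⟩
    exact ⟨a, b, hab, ha, hb, hva, hvb⟩

lemma hasTwoNeighborsIn_iff_not_compl [Finite V] {v : V} (hv : {w | G.Adj v w}.ncard = 3)
    (U : Set V) : G.HasTwoNeighborsIn v U ↔ ¬ G.HasTwoNeighborsIn v Uᶜ := by
  have hsplit := Set.ncard_inter_add_ncard_sdiff_eq_ncard {w | G.Adj v w} U
  rw [Set.sdiff_eq] at hsplit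
  rw [hasTwoNeighborsIn_iff_one_lt_ncard, hasTwoNeighborsIn_iff_one_lt_ncard]
  omega

lemma Walk.IsCycle.hasTwoNeighborsIn_support {u v : V} {c : G.Walk u u} (hc : c.IsCycle)
    (hv : v ∈ c.support) : G.HasTwoNeighborsIn v {w | w ∈ c.support} := by
  obtain ⟨a, b, hab, hN⟩ := Set.ncard_eq_two.mp (hc.ncard_neighborSet_toSubgraph_eq_two hv)
  have hadj : ∀ w ∈ c.toSubgraph.neighborSet v, w ∈ c.support ∧ G.Adj v w := fun w hw =>
    ⟨(c.mem_verts_toSubgraph).mp (c.toSubgraph.edge_vert (Subgraph.adj_symm _ hw)),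
      Subgraph.Adj.adj_sub hw⟩
  obtain ⟨ha, hva⟩ := hadj a (by simp [hN])
  obtain ⟨hb, hvb⟩ := hadj b (by simp [hN])
  exact ⟨a, b, hab, ha, hb, hva, hvb⟩

lemma IsAcyclic.exists_forall_adj_eq [Finite V] [Nonempty V] (hG : G.IsAcyclic) :
    ∃ u, ∀ a b, G.Adj u a → G.Adj u b → a = b := by
  obtain ⟨u, v, p, hp, hmax⟩ := Walk.exists_isPath_forall_isPath_length_le_length G
  have hsnd : ∀ w, G.Adj u w → w = p.snd := fun w hw =>
    hG.eq_snd_of_adj_start hp hw <| by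
      by_contra hws
      have := hmax _ _ (Walk.cons hw.symm p) (hp.cons hws)
      simp at this
  exact ⟨u, fun a b ha hb => (hsnd a ha).trans (hsnd b hb).symm⟩

end SimpleGraph

section Infection

variable {V : Type*} {G : SimpleGraph V} {S : Set V}

lemma infectIter_subset_succ (p : ℕ) : infectIter G S p ⊆ infectIter G S (p + 1) :=
  Set.subset_union_left

lemma subset_infectIter : ∀ p, S ⊆ infectIter G S p
  | 0 => subset_rfl
  | p + 1 => (subset_infectIter p).trans (infectIter_subset_succ p)

lemma disjoint_infectIter {U : Set V} (hU : ∀ v ∈ U, ¬ G.HasTwoNeighborsIn v Uᶜ)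
    (hS : Disjoint U S) : ∀ p, Disjoint U (infectIter G S p)
  | 0 => hS
  | p + 1 => by
    have ih := disjoint_infectIter hU hS p
    rw [Set.disjoint_left]
    rintro v hvU (hv | hv)
    · exact Set.disjoint_left.mp ih hvU hv
    · exact hU v hvU (HasTwoNeighborsIn.mono hv ih.subset_compl_left)

lemma isHullSet_of_forall_ssubset [Finite V]
    (h : ∀ p, infectIter G S p ≠ Set.univ → infectIter G S p ⊂ infectIter G S (p + 1)) :
    IsHullSet G S := by
  have key : ∀ p, infectIter G S p = Set.univ ∨ p ≤ (infectIter G S p).ncard := by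
    intro p
    induction p with
    | zero => exact Or.inr (Nat.zero_le _)
    | succ p ih =>
      by_cases hp : infectIter G S p = Set.univ
      · exact Or.inl (Set.eq_univ_of_univ_subset (hp ▸ infectIter_subset_succ p))
      · exact Or.inr ((ih.resolve_left hp).trans_lt (Set.ncard_lt_ncard (h p hp)))
  refine ⟨Nat.card V + 1, (key _).resolve_right fun hle => ?_⟩
  have := Set.ncard_le_card (infectIter G S (Nat.card V + 1))
  omega

lemma IsHullSet.isDecyclingSet [Finite V] (hcub : IsCubic G) (hS : IsHullSet G S) :
    IsDecyclingSet G S := by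
  intro u c hc
  set c' := c.map (Embedding.induce (G := G) Sᶜ).toHom
  have hc' : c'.IsCycle := hc.map (Embedding.induce (G := G) Sᶜ).injective
  set U : Set V := {w | w ∈ c'.support}
  have hUS : Disjoint U S := by
    rw [Set.disjoint_left]
    intro x (hx : x ∈ c'.support)
    rw [Walk.support_map] at hx
    obtain ⟨x, -, rfl⟩ := List.mem_map.mp hx
    exact x.2
  have hU : ∀ v ∈ U, ¬ G.HasTwoNeighborsIn v Uᶜ := fun v hv =>
    (hasTwoNeighborsIn_iff_not_compl (hcub v) U).mp (hc'.hasTwoNeighborsIn_support hv)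
  obtain ⟨p, hp⟩ := hS
  have hdisj := disjoint_infectIter hU hUS p
  rw [hp, Set.disjoint_univ] at hdisj
  exact Set.eq_empty_iff_forall_notMem.mp hdisj _ c'.start_mem_support

lemma IsDecyclingSet.ssubset_infectStep [Finite V] (hcub : IsCubic G) (hS : IsDecyclingSet G S)
    {I : Set V} (hSI : S ⊆ I) (hI : I ≠ Set.univ) : I ⊂ infectStep G I := by
  have : Nonempty ↥Iᶜ := (Set.nonempty_compl.mpr hI).to_subtype
  obtain ⟨⟨v, hv⟩, hleaf⟩ :=
    (IsAcyclic.embedding (G.induceHomOfLE (Set.compl_subset_compl.mpr hSI)) hS).exists_forall_adj_eq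
  have hv2 : ¬ G.HasTwoNeighborsIn v Iᶜ := by
    rintro ⟨a, b, hab, ha, hb, hva, hvb⟩
    exact hab (congrArg Subtype.val (hleaf ⟨a, ha⟩ ⟨b, hb⟩ hva hvb))
  refine (Set.ssubset_iff_of_subset Set.subset_union_left).mpr ⟨v, Or.inr ?_, hv⟩
  exact (hasTwoNeighborsIn_iff_not_compl (hcub v) I).mpr hv2

lemma IsDecyclingSet.isHullSet [Finite V] (hcub : IsCubic G) (hS : IsDecyclingSet G S) :
    IsHullSet G S :=
  isHullSet_of_forall_ssubset fun p hp => hS.ssubset_infectStep hcub (subset_infectIter p) hp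

lemma isHullSet_iff_isDecyclingSet [Finite V] (hcub : IsCubic G) :
    IsHullSet G S ↔ IsDecyclingSet G S :=
  ⟨IsHullSet.isDecyclingSet hcub, IsDecyclingSet.isHullSet hcub⟩

end Infection

theorem stmt2_general {V : Type*} [Fintype V] (G : SimpleGraph V)
    (hcub : IsCubic G) :
    hullNumber G = decyclingNumber G := by
  simp only [hullNumber, decyclingNumber, isHullSet_iff_isDecyclingSet hcub]

theorem stmt2 {V : Type*} [Fintype V] (G : SimpleGraph V)
    (hcub : IsCubic G) (hconn : G.Connected) :
    hullNumber G = decyclingNumber G :=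
  stmt2_general G hcub
end

section
/- Let σ ∈ S_n be a nontrivial permutation written as a product of m disjoint cycles each of length ≥ 3, and let G = GGP(n,σ). Then h_{P3}(G) ≥ ⌈(n+1)/2⌉; if every cycle of σ has even length then h_{P3}(G) = (n+2)/2; and if k ≥ 1 cycles of σ have odd length then h_{P3}(G) ≤ (n+k)/2. -/
open SimpleGraph

def GGP (n : ℕ) [NeZero n] (σ : Equiv.Perm (Fin n)) : SimpleGraph (Fin n ⊕ Fin n) :=
  SimpleGraph.fromRel fun x y =>
    match x, y with
    | Sum.inl i, Sum.inl j => j = i + 1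
    | Sum.inl i, Sum.inr j => i = j
    | Sum.inr i, Sum.inr j => j = σ i
    | _, _ => False


/-!
Lower bound. In a cubic graph let `cutSize A` count the edges leaving the infected set `A`.
A vertex that gets infected has at least two infected neighbours, so adding it lowers the cut
by at least one, and adding the last vertex lowers it by three. Hence a hull set `S ≠ V` has
`cutSize S ≥ |V \ S| + 2`, and `cutSize S ≤ 3|S|` gives `4|S| ≥ |V| + 2 = 2n + 2`.

Upper bound. Number every cycle of `σ` from a base point and let `E` be the points at even
position; `σ` maps `E`, less the last point of each odd cycle, onto the odd positions, so
`2|E| = n + k`. The inner vertices `v_i = inr i` with `i ∈ E`, together with one outer vertex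
`u_a = inl a`, form a hull set: every other inner vertex has both its `σ`-neighbours in `E`,
except `a` and `σ a`, which are reached through `u_a`; once all inner vertices are infected, the
outer cycle is infected around from `u_a`. If `k ≥ 1`, the last point `e` of an odd cycle can be
dropped from `E` by choosing `a = σ⁻¹ e`.
-/

open Finset

section Infection

variable {V : Type*} (G : SimpleGraph V)

theorem infectIter_mono_left {S S' : Set V} (h : S ⊆ S') (p : ℕ) :
    infectIter G S p ⊆ infectIter G S' p := by
  induction p with
  | zero => exact h
  | succ p ih =>
    refine Set.union_subset_union ih ?_
    rintro v ⟨a, b, hab, ha, hb, hva, hvb⟩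
    exact ⟨a, b, hab, ih ha, ih hb, hva, hvb⟩

theorem infectIter_mono_right (S : Set V) : Monotone (infectIter G S) :=
  monotone_nat_of_le_succ fun _ => Set.subset_union_left

theorem IsHullSet.mono {S S' : Set V} (hS : IsHullSet G S) (h : S ⊆ S') : IsHullSet G S' := by
  obtain ⟨p, hp⟩ := hS
  exact ⟨p, Set.eq_univ_of_univ_subset (hp ▸ infectIter_mono_left G h p)⟩

theorem hullNumber_le_ncard {S : Set V} (hS : IsHullSet G S) : hullNumber G ≤ S.ncard :=
  Nat.sInf_le ⟨S, rfl, hS⟩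

theorem IsHullSet.exists_adj_adj {S : Set V} (hS : IsHullSet G S) (hne : S ≠ Set.univ) :
    ∃ v ∉ S, ∃ a b, a ≠ b ∧ a ∈ S ∧ b ∈ S ∧ G.Adj v a ∧ G.Adj v b := by
  by_contra! hstuck
  have hstep : infectStep G S = S := by
    refine Set.union_eq_left.2 fun v ⟨a, b, hab, ha, hb, hva, hvb⟩ => ?_
    by_contra hv
    exact hstuck v hv a b hab ha hb hva hvb
  have hiter : ∀ p, infectIter G S p = S := fun p => by
    induction p with
    | zero => rfl
    | succ p ih => rw [infectIter, ih, hstep]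
  obtain ⟨p, hp⟩ := hS
  exact hne (hiter p ▸ hp)

theorem subset_pHull (S : Set V) : S ⊆ pHull G S :=
  Set.subset_iUnion_of_subset 0 subset_rfl

theorem mem_pHull_of_adj {S : Set V} {v a b : V} (hab : a ≠ b) (ha : a ∈ pHull G S)
    (hb : b ∈ pHull G S) (hva : G.Adj v a) (hvb : G.Adj v b) : v ∈ pHull G S := by
  obtain ⟨p, hp⟩ := Set.mem_iUnion.1 ha
  obtain ⟨q, hq⟩ := Set.mem_iUnion.1 hb
  refine Set.mem_iUnion.2 ⟨max p q + 1, Or.inr ⟨a, b, hab, ?_, ?_, hva, hvb⟩⟩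
  · exact infectIter_mono_right G S (le_max_left p q) hp
  · exact infectIter_mono_right G S (le_max_right p q) hq

theorem isHullSet_of_pHull_eq_univ [Finite V] {S : Set V} (h : pHull G S = Set.univ) :
    IsHullSet G S := by
  choose p hp using fun v => Set.mem_iUnion.1 (h ▸ Set.mem_univ v : v ∈ pHull G S)
  obtain ⟨m, hm⟩ := Finite.exists_le p
  exact ⟨m, Set.eq_univ_of_forall fun v => infectIter_mono_right G S (hm v) (hp v)⟩

end Infection

section CubicLowerBound

variable {V : Type*} [Fintype V] [DecidableEq V] (G : SimpleGraph V) [DecidableRel G.Adj]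

def cutSize (A : Finset V) : ℕ := ∑ v ∈ A, #(G.neighborFinset v \ A)

theorem cutSize_insert {A : Finset V} {v : V} (hv : v ∉ A) :
    cutSize G (insert v A) + 2 * #(G.neighborFinset v ∩ A) = cutSize G A + G.degree v := by
  have hself : G.neighborFinset v \ insert v A = G.neighborFinset v \ A := by
    ext w
    simp only [mem_sdiff, mem_insert, mem_neighborFinset]
    exact ⟨fun ⟨h, h'⟩ => ⟨h, fun hw => h' (Or.inr hw)⟩,
      fun ⟨h, h'⟩ =>
        ⟨h, fun hw => hw.elim (fun hwv => G.loopless.irrefl v (hwv ▸ h)) h'⟩⟩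
  have hother : ∀ w ∈ A, #(G.neighborFinset w \ insert v A) + (if G.Adj w v then 1 else 0) =
      #(G.neighborFinset w \ A) := fun w _ => by
    rw [sdiff_insert]
    by_cases hwv : G.Adj w v
    · rw [if_pos hwv, card_erase_add_one (by simp [hwv, hv])]
    · rw [if_neg hwv, erase_eq_of_notMem (by simp [hwv]), add_zero]
  have hcount : ∑ w ∈ A, (if G.Adj w v then 1 else 0) = #(G.neighborFinset v ∩ A) := by
    rw [← card_filter]
    congr 1
    ext w
    simp [G.adj_comm, and_comm]
  have hsplit := card_sdiff_add_card_inter (G.neighborFinset v) A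
  have hA := sum_congr rfl hother
  rw [sum_add_distrib, hcount] at hA
  rw [cutSize, sum_insert hv, hself, cutSize, ← hA, ← card_neighborFinset_eq_degree]
  omega

variable {G}

theorem cutSize_le (hG : G.IsRegularOfDegree 3) (A : Finset V) : cutSize G A ≤ 3 * #A := by
  rw [cutSize, mul_comm, ← smul_eq_mul, ← sum_const]
  exact sum_le_sum fun v _ => (card_le_card sdiff_subset).trans (hG v).le

theorem card_compl_add_two_le_cutSize (hG : G.IsRegularOfDegree 3) {A : Finset V}
    (hA : IsHullSet G A) (hne : A ≠ univ) : #Aᶜ + 2 ≤ cutSize G A := by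
  induction hm : #Aᶜ generalizing A with
  | zero => exact absurd (compl_eq_empty_iff _ |>.1 (card_eq_zero.1 hm)) hne
  | succ m ih =>
    obtain ⟨v, hv, a, b, hab, ha, hb, hva, hvb⟩ := hA.exists_adj_adj G (by exact_mod_cast hne)
    rw [mem_coe] at hv ha hb
    have htwo : 2 ≤ #(G.neighborFinset v ∩ A) := by
      rw [← card_pair hab]
      exact card_le_card (by simp [insert_subset_iff, hva, hvb, ha, hb])
    have hstep := cutSize_insert G hv
    rw [hG v] at hstep
    have hcompl : #(insert v A)ᶜ = m := by
      rw [compl_insert, card_erase_of_mem (mem_compl.2 hv), hm, Nat.add_sub_cancel]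
    by_cases hfull : insert v A = univ
    · have hnbrs : G.neighborFinset v ∩ A = G.neighborFinset v := inter_eq_left.2 fun w hw => by
        rcases mem_insert.1 (hfull ▸ mem_univ w : w ∈ insert v A) with rfl | hw'
        · exact absurd hw (by simp)
        · exact hw'
      have hzero : cutSize G univ = 0 := by simp [cutSize]
      rw [hfull, compl_univ, card_empty] at hcompl
      rw [hfull, hzero, hnbrs, card_neighborFinset_eq_degree, hG v] at hstep
      omega
    · have := ih (hA.mono G (by simp [Set.subset_insert])) hfull hcompl
      omega

theorem card_add_two_le_four_mul_hullNumber [Nonempty V] (hG : G.IsRegularOfDegree 3) :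
    Fintype.card V + 2 ≤ 4 * hullNumber G := by
  obtain ⟨S, hcard, hS⟩ := Nat.sInf_mem (⟨_, Set.univ, rfl, 0, rfl⟩ :
    {m | ∃ S : Set V, S.ncard = m ∧ IsHullSet G S}.Nonempty)
  obtain ⟨A, rfl⟩ := S.toFinite.exists_finset_coe
  rw [hullNumber, ← hcard, Set.ncard_coe_finset]
  by_cases hfull : A = univ
  · rw [hfull, card_univ]
    have := Fintype.card_pos (α := V)
    omega
  · have hcut := card_compl_add_two_le_cutSize hG hS hfull
    have := cutSize_le hG A
    rw [card_compl] at hcut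
    have := card_le_univ A
    omega

end CubicLowerBound

namespace Equiv.Perm

section CycleBase

variable {α : Type*} (σ : Perm α)

noncomputable def cycleBase (x : α) : α :=
  (Quotient.mk (SameCycle.setoid σ) x).out

theorem sameCycle_cycleBase (x : α) : σ.SameCycle (σ.cycleBase x) x :=
  Quotient.mk_out (s := SameCycle.setoid σ) x

theorem cycleBase_eq_of_sameCycle {x y : α} (h : σ.SameCycle x y) :
    σ.cycleBase x = σ.cycleBase y := by
  rw [cycleBase, cycleBase, Quotient.sound (s := SameCycle.setoid σ) h]

variable [Finite α] [DecidableEq α]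

noncomputable def cyclePos (x : α) : ℕ :=
  Nat.find (σ.sameCycle_cycleBase x).exists_nat_pow_eq

theorem pow_cyclePos_cycleBase (x : α) : (σ ^ σ.cyclePos x) (σ.cycleBase x) = x :=
  Nat.find_spec (σ.sameCycle_cycleBase x).exists_nat_pow_eq

end CycleBase

variable {α : Type*} [Fintype α] [DecidableEq α]

section Positions

variable (σ : Perm α)

noncomputable def evenPositions : Finset α := {x | Even (σ.cyclePos x)}

noncomputable def oddCycleEnds : Finset α :=
  {x | σ.cyclePos x + 1 = #(σ.cycleOf x).support ∧ Odd #(σ.cycleOf x).support}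

end Positions

variable {σ : Perm α}

theorem cycleBase_mem_support_cycleOf {x : α} (hx : σ x ≠ x) :
    σ.cycleBase x ∈ (σ.cycleOf x).support :=
  (mem_support_cycleOf_iff' hx).2 (σ.sameCycle_cycleBase x).symm

theorem cyclePos_lt {x : α} (hx : σ x ≠ x) : σ.cyclePos x < #(σ.cycleOf x).support := by
  obtain ⟨t, ht, hpow⟩ := (σ.isCycleOn_support_cycleOf x).exists_pow_eq
    (cycleBase_mem_support_cycleOf hx) ((mem_support_cycleOf_iff' hx).2 (SameCycle.refl _ _))
  exact (Nat.find_min' _ hpow).trans_lt ht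

theorem cyclePos_eq_of_pow_apply {x y : α} (hx : σ x ≠ x) {t : ℕ}
    (ht : t < #(σ.cycleOf x).support) (hy : (σ ^ t) (σ.cycleBase x) = y) :
    σ.cyclePos y = t := by
  have hxy : σ.SameCycle x y :=
    (σ.sameCycle_cycleBase x).symm.trans ⟨t, by rw [zpow_natCast, hy]⟩
  have hbase : σ.cycleBase y = σ.cycleBase x := (cycleBase_eq_of_sameCycle σ hxy).symm
  have hle : σ.cyclePos y ≤ t := Nat.find_min' _ (hbase ▸ hy)
  have hpow : (σ ^ σ.cyclePos y) (σ.cycleBase x) = (σ ^ t) (σ.cycleBase x) := by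
    rw [← hbase, pow_cyclePos_cycleBase, hbase, hy]
  exact (((σ.isCycleOn_support_cycleOf x).pow_apply_eq_pow_apply
    (cycleBase_mem_support_cycleOf hx)).1 hpow).eq_of_lt_of_lt (hle.trans_lt ht) ht

theorem cyclePos_apply {x : α} (hx : σ x ≠ x) :
    σ.cyclePos (σ x) = (σ.cyclePos x + 1) % #(σ.cycleOf x).support := by
  refine cyclePos_eq_of_pow_apply hx (Nat.mod_lt _ ((cyclePos_lt hx).trans_le' (Nat.zero_le _))) ?_
  rw [← (σ.sameCycle_cycleBase x).cycleOf_eq, pow_mod_card_support_cycleOf_self_apply,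
    pow_succ', mul_apply, pow_cyclePos_cycleBase]

theorem mem_evenPositions {x : α} : x ∈ σ.evenPositions ↔ Even (σ.cyclePos x) := by
  simp [evenPositions]

theorem mem_oddCycleEnds {x : α} : x ∈ σ.oddCycleEnds ↔
    σ.cyclePos x + 1 = #(σ.cycleOf x).support ∧ Odd #(σ.cycleOf x).support := by
  simp [oddCycleEnds]

theorem cyclePos_symm_apply_add_one {x : α} (hx : σ x ≠ x) (hpos : 0 < σ.cyclePos x) :
    σ.cyclePos (σ.symm x) + 1 = σ.cyclePos x := by
  have hy : σ (σ.symm x) ≠ σ.symm x := fun h => hx (by simpa using congrArg σ h)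
  have happly := cyclePos_apply hy
  rw [apply_symm_apply] at happly
  obtain hlt | hlast : σ.cyclePos (σ.symm x) + 1 < #(σ.cycleOf (σ.symm x)).support ∨
      σ.cyclePos (σ.symm x) + 1 = #(σ.cycleOf (σ.symm x)).support := by
    have := cyclePos_lt hy
    omega
  · rwa [Nat.mod_eq_of_lt hlt, eq_comm] at happly
  · rw [hlast, Nat.mod_self] at happly
    omega

theorem even_cyclePos_apply_iff {x : α} (hx : σ x ≠ x) :
    Even (σ.cyclePos (σ x)) ↔ ¬Even (σ.cyclePos x) ∨ x ∈ σ.oddCycleEnds := by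
  rw [cyclePos_apply hx, mem_oddCycleEnds]
  obtain hlt | hlast : σ.cyclePos x + 1 < #(σ.cycleOf x).support ∨
      σ.cyclePos x + 1 = #(σ.cycleOf x).support := by
    have := cyclePos_lt hx
    omega
  · rw [Nat.mod_eq_of_lt hlt, Nat.even_add_one]
    have := hlt.ne
    tauto
  · rw [← hlast, Nat.mod_self, Nat.odd_add_one, Nat.not_odd_iff_even]
    simp only [Even.zero, true_and, true_iff]
    tauto

theorem oddCycleEnds_subset_evenPositions : σ.oddCycleEnds ⊆ σ.evenPositions := by
  intro x hx
  rw [mem_oddCycleEnds] at hx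
  rw [mem_evenPositions, ← Nat.not_odd_iff_even, ← Nat.odd_add_one, hx.1]
  exact hx.2

theorem apply_mem_evenPositions (hσ : ∀ x, σ x ≠ x) {x : α} (hx : x ∉ σ.evenPositions) :
    σ x ∈ σ.evenPositions := by
  rw [mem_evenPositions, even_cyclePos_apply_iff (hσ x)]
  exact Or.inl (mt mem_evenPositions.2 hx)

theorem symm_apply_mem_evenPositions_sdiff (hσ : ∀ x, σ x ≠ x) {x : α}
    (hx : x ∉ σ.evenPositions) : σ.symm x ∈ σ.evenPositions \ σ.oddCycleEnds := by
  have := mt (even_cyclePos_apply_iff (hσ (σ.symm x))).2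
  rw [apply_symm_apply] at this
  rw [mem_evenPositions] at hx
  rw [mem_sdiff, mem_evenPositions]
  tauto

theorem two_mul_card_evenPositions (hσ : ∀ x, σ x ≠ x) :
    2 * #σ.evenPositions = Fintype.card α + #σ.oddCycleEnds := by
  have hshift : #(σ.evenPositions \ σ.oddCycleEnds) = #σ.evenPositionsᶜ := by
    refine card_equiv σ fun x => ?_
    rw [mem_sdiff, mem_compl, mem_evenPositions, mem_evenPositions, even_cyclePos_apply_iff (hσ x)]
    tauto
  rw [card_sdiff_of_subset oddCycleEnds_subset_evenPositions, card_compl] at hshift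
  have := card_le_card (oddCycleEnds_subset_evenPositions (σ := σ))
  have := card_le_univ σ.evenPositions
  omega

theorem card_support_cycleOf_mem_cycleType {x : α} (hx : σ x ≠ x) :
    #(σ.cycleOf x).support ∈ σ.cycleType := by
  rw [cycleType_def, Multiset.mem_map]
  exact ⟨σ.cycleOf x, cycleOf_mem_cycleFactorsFinset_iff.2 (mem_support.2 hx), rfl⟩

theorem apply_apply_ne_self (hσ : ∀ x, σ x ≠ x) (hlen : ∀ c ∈ σ.cycleType, 3 ≤ c)
    (x : α) : σ (σ x) ≠ x := by
  intro h
  have hdvd := ((σ.isCycleOn_support_cycleOf x).pow_apply_eq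
    ((mem_support_cycleOf_iff' (hσ x)).2 (SameCycle.refl _ _)) (n := 2)).1
    (by rwa [sq, mul_apply])
  have := hlen _ (card_support_cycleOf_mem_cycleType (hσ x))
  have := Nat.le_of_dvd two_pos hdvd
  omega

theorem card_oddCycleEnds (hσ : ∀ x, σ x ≠ x) :
    #σ.oddCycleEnds = Multiset.card (σ.cycleType.filter Odd) := by
  rw [cycleType_def, Multiset.filter_map, Multiset.card_map]
  change _ = #(σ.cycleFactorsFinset.filter fun c => Odd #c.support)
  refine card_nbij σ.cycleOf (fun x hx => ?_) (fun x hx y hy hxy => ?_) (fun c hc => ?_)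
  · rw [mem_coe, mem_oddCycleEnds] at hx
    rw [mem_coe, mem_filter]
    exact ⟨cycleOf_mem_cycleFactorsFinset_iff.2 (mem_support.2 (hσ x)), hx.2⟩
  · rw [mem_coe, mem_oddCycleEnds] at hx hy
    have hxy' : σ.SameCycle x y := by
      rw [← mem_support_cycleOf_iff' (hσ x), hxy, mem_support_cycleOf_iff' (hσ y)]
    have hpos : σ.cyclePos x = σ.cyclePos y := by
      have := hxy ▸ hx.1
      omega
    rw [← σ.pow_cyclePos_cycleBase x, ← σ.pow_cyclePos_cycleBase y, hpos,
      cycleBase_eq_of_sameCycle σ hxy']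
  · rw [mem_coe, mem_filter] at hc
    obtain ⟨z, hz⟩ : c.support.Nonempty := card_pos.1 hc.2.pos
    have hcz : c = σ.cycleOf z := cycle_is_cycleOf hz hc.1
    have hz' : σ z ≠ z := mem_support.1 (support_cycleOf_le σ z (hcz ▸ hz))
    set L := #(σ.cycleOf z).support
    have hL : 0 < L := (cyclePos_lt hz').trans_le' (Nat.zero_le _)
    set x := (σ ^ (L - 1)) (σ.cycleBase z)
    have hzx : σ.SameCycle z x :=
      (σ.sameCycle_cycleBase z).symm.trans ⟨(L - 1 : ℕ), by rw [zpow_natCast]⟩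
    refine ⟨x, ?_, ?_⟩
    · rw [mem_coe, mem_oddCycleEnds, ← hzx.cycleOf_eq,
        cyclePos_eq_of_pow_apply hz' (by omega) rfl]
      exact ⟨by omega, hcz ▸ hc.2⟩
    · rw [hcz, hzx.cycleOf_eq]

end Equiv.Perm

section GeneralizedPetersen

open Sum Fin.CommRing Equiv.Perm

variable {n : ℕ} [NeZero n] {σ : Equiv.Perm (Fin n)}

theorem Fin.natCast_ne_zero_of_lt {k : ℕ} (hk : 0 < k) (hkn : k < n) : (k : Fin n) ≠ 0 := by
  rw [Ne, Fin.natCast_eq_zero]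
  exact Nat.not_dvd_of_pos_of_lt hk hkn

theorem GGP_adj_inl_inr (i : Fin n) : (GGP n σ).Adj (inl i) (inr i) := by
  simp [GGP]

theorem GGP_adj_inl_add_one (hn : 1 < n) (i : Fin n) : (GGP n σ).Adj (inl i) (inl (i + 1)) := by
  simpa [GGP] using hn.ne'

theorem GGP_adj_inr_apply {i : Fin n} (hi : σ i ≠ i) : (GGP n σ).Adj (inr i) (inr (σ i)) := by
  simpa [GGP] using hi.symm

theorem GGP_neighborFinset_inl [DecidableRel (GGP n σ).Adj] (hn : 1 < n) (i : Fin n) :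
    (GGP n σ).neighborFinset (inl i) = {inl (i + 1), inl (i - 1), inr i} := by
  have h1 : (1 : Fin n) ≠ 0 := by
    simpa using Fin.natCast_ne_zero_of_lt one_pos hn
  ext (j | j) <;> simp only [mem_neighborFinset] <;> simp only [GGP, fromRel_adj, ne_eq,
    inl.injEq, inr.injEq, mem_insert, mem_singleton, reduceCtorEq, or_false, false_or]
  · constructor
    · rintro ⟨-, h | h⟩
      exacts [Or.inl h, Or.inr (eq_sub_of_add_eq h.symm)]
    · rintro (rfl | rfl)
      · exact ⟨fun h => h1 (by linear_combination -h), Or.inl rfl⟩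
      · exact ⟨fun h => h1 (by linear_combination h), Or.inr (sub_add_cancel i 1).symm⟩
  · simp only [not_false_eq_true, true_and]
    exact eq_comm

theorem GGP_neighborFinset_inr [DecidableRel (GGP n σ).Adj] (hσ : ∀ i, σ i ≠ i) (i : Fin n) :
    (GGP n σ).neighborFinset (inr i) = {inl i, inr (σ i), inr (σ.symm i)} := by
  ext (j | j) <;> simp only [mem_neighborFinset] <;> simp only [GGP, fromRel_adj, ne_eq,
    inl.injEq, inr.injEq, mem_insert, mem_singleton, reduceCtorEq, or_false, false_or, or_self,
    Equiv.eq_symm_apply, not_false_eq_true, true_and]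
  · constructor
    · rintro ⟨-, h | h⟩
      exacts [Or.inl h, Or.inr h.symm]
    · rintro (rfl | rfl)
      · exact ⟨fun h => hσ i h.symm, Or.inl rfl⟩
      · exact ⟨hσ j, Or.inr rfl⟩

theorem GGP_isRegularOfDegree_three [DecidableRel (GGP n σ).Adj] (hn : 2 < n)
    (hσ : ∀ i, σ i ≠ i) (hσ2 : ∀ i, σ (σ i) ≠ i) : (GGP n σ).IsRegularOfDegree 3 := by
  have h2 : (2 : Fin n) ≠ 0 := by
    simpa using Fin.natCast_ne_zero_of_lt two_pos hn
  rintro (i | i) <;> rw [← card_neighborFinset_eq_degree, card_eq_three]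
  · refine ⟨_, _, _, fun h => h2 ?_, by simp, by simp, GGP_neighborFinset_inl (by omega) i⟩
    linear_combination inl.inj h
  · refine ⟨_, _, _, by simp, by simp, fun h => hσ2 i ?_, GGP_neighborFinset_inr hσ i⟩
    simpa using congrArg σ (inr.inj h)

theorem isHullSet_GGP (hn : 1 < n) (hσ : ∀ i, σ i ≠ i) (hσ2 : ∀ i, σ (σ i) ≠ i)
    {T : Finset (Fin n)} {a : Fin n}
    (hT : ∀ i ∉ T, i ≠ a → i ≠ σ a → σ.symm i ∈ T ∧ σ i ∈ T)
    (ha : a ∈ T ∨ σ.symm a ∈ T) (hσa : σ a ∈ T ∨ σ (σ a) ∈ T) :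
    IsHullSet (GGP n σ) (insert (inl a) (inr '' T)) := by
  set H := pHull (GGP n σ) (insert (inl a) (inr '' T))
  have hmem : ∀ i ∈ T, inr i ∈ H := fun i hi =>
    subset_pHull _ _ (Set.mem_insert_of_mem _ ⟨i, hi, rfl⟩)
  have hadj_symm : ∀ i, (GGP n σ).Adj (inr i) (inr (σ.symm i)) := fun i => by
    simpa using (GGP_adj_inr_apply (hσ (σ.symm i))).symm
  have hgeneric : ∀ i ∉ T, i ≠ a → i ≠ σ a → inr i ∈ H := fun i hi hia hiσa => by
    obtain ⟨hprev, hnext⟩ := hT i hi hia hiσa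
    refine mem_pHull_of_adj _ ?_ (hmem _ hprev) (hmem _ hnext) (hadj_symm i)
      (GGP_adj_inr_apply (hσ i))
    simpa [Equiv.symm_apply_eq] using (hσ2 i).symm
  have hinr_a : inr a ∈ H := by
    by_cases haT : a ∈ T
    · exact hmem a haT
    · exact mem_pHull_of_adj _ (by simp) (subset_pHull _ _ (Set.mem_insert _ _))
        (hmem _ (ha.resolve_left haT)) (GGP_adj_inl_inr a).symm (hadj_symm a)
  have hinr_σa : inr (σ a) ∈ H := by
    by_cases hσaT : σ a ∈ T
    · exact hmem _ hσaT
    · refine mem_pHull_of_adj _ ?_ hinr_a (hmem _ (hσa.resolve_left hσaT))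
        (by simpa using hadj_symm (σ a)) (GGP_adj_inr_apply (hσ (σ a)))
      simpa using (hσ2 a).symm
  have hinr : ∀ i, inr i ∈ H := fun i => by
    by_cases hiT : i ∈ T
    · exact hmem i hiT
    by_cases hia : i = a
    · exact hia ▸ hinr_a
    by_cases hiσa : i = σ a
    · exact hiσa ▸ hinr_σa
    exact hgeneric i hiT hia hiσa
  have hinl : ∀ t : ℕ, inl (a + t) ∈ H := fun t => by
    induction t with
    | zero => simpa using subset_pHull _ _ (Set.mem_insert (inl a) _)
    | succ t ih =>
      refine mem_pHull_of_adj _ (by simp) ih (hinr _) ?_ (GGP_adj_inl_inr _)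
      simpa [add_assoc] using (GGP_adj_inl_add_one hn (a + t)).symm
  refine isHullSet_of_pHull_eq_univ _ (Set.eq_univ_of_forall ?_)
  rintro (i | i)
  · simpa using hinl (i - a).val
  · exact hinr i

theorem ncard_insert_inl_image_inr {α β : Type*} (a : α) (T : Finset β) :
    (insert (inl a) (inr '' T) : Set (α ⊕ β)).ncard = #T + 1 := by
  rw [Set.ncard_insert_of_notMem (by simp), Set.ncard_image_of_injective _ inr_injective,
    Set.ncard_coe_finset]

theorem hullNumber_GGP_le_card_evenPositions_add_one (hn : 1 < n) (hσ : ∀ i, σ i ≠ i)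
    (hσ2 : ∀ i, σ (σ i) ≠ i) : hullNumber (GGP n σ) ≤ #σ.evenPositions + 1 := by
  obtain ⟨a, ha⟩ : σ.evenPositions.Nonempty := by
    rw [← card_pos]
    have := σ.two_mul_card_evenPositions hσ
    rw [Fintype.card_fin] at this
    omega
  have hhull : IsHullSet (GGP n σ) (insert (inl a) (inr '' σ.evenPositions)) := by
    refine isHullSet_GGP hn hσ hσ2 (fun i hi _ _ => ⟨?_, σ.apply_mem_evenPositions hσ hi⟩)
      (Or.inl ha) ?_
    · exact (mem_sdiff.1 (σ.symm_apply_mem_evenPositions_sdiff hσ hi)).1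
    · by_cases hσa : σ a ∈ σ.evenPositions
      exacts [Or.inl hσa, Or.inr (σ.apply_mem_evenPositions hσ hσa)]
  simpa [ncard_insert_inl_image_inr] using hullNumber_le_ncard _ hhull

theorem hullNumber_GGP_le_card_evenPositions (hn : 1 < n) (hσ : ∀ i, σ i ≠ i)
    (hlen : ∀ c ∈ σ.cycleType, 3 ≤ c) {e : Fin n} (he : e ∈ σ.oddCycleEnds) :
    hullNumber (GGP n σ) ≤ #σ.evenPositions := by
  have hσ2 := σ.apply_apply_ne_self hσ hlen
  have heE := σ.oddCycleEnds_subset_evenPositions he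
  obtain ⟨a, rfl⟩ : ∃ a, σ a = e := ⟨σ.symm e, σ.apply_symm_apply e⟩
  have hL := hlen _ (σ.card_support_cycleOf_mem_cycleType (hσ (σ a)))
  have he' := mem_oddCycleEnds.1 he
  have hpos_a : σ.cyclePos a + 1 = σ.cyclePos (σ a) := by
    simpa using σ.cyclePos_symm_apply_add_one (hσ (σ a)) (by omega)
  have hpos_prev := σ.cyclePos_symm_apply_add_one (hσ a) (by omega)
  have hhull : IsHullSet (GGP n σ) (insert (inl a) (inr '' σ.evenPositions.erase (σ a))) := by
    refine isHullSet_GGP hn hσ hσ2 (fun i hi hia hiσa => ?_) (Or.inr ?_) (Or.inr ?_)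
    · have hiE : i ∉ σ.evenPositions := fun h => hi (mem_erase.2 ⟨hiσa, h⟩)
      obtain ⟨hprev, hprev'⟩ := mem_sdiff.1 (σ.symm_apply_mem_evenPositions_sdiff hσ hiE)
      exact ⟨mem_erase.2 ⟨fun h => hprev' (h ▸ he), hprev⟩,
        mem_erase.2 ⟨fun h => hia (σ.injective h), σ.apply_mem_evenPositions hσ hiE⟩⟩
    · refine mem_erase.2 ⟨fun h => by rw [h] at hpos_prev; omega, ?_⟩
      rw [mem_evenPositions, Nat.even_iff]
      rw [Nat.odd_iff] at he'
      omega
    · refine mem_erase.2 ⟨hσ (σ a), ?_⟩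
      rw [mem_evenPositions, even_cyclePos_apply_iff (hσ (σ a))]
      exact Or.inr he
  have := hullNumber_le_ncard _ hhull
  rwa [ncard_insert_inl_image_inr, card_erase_add_one heE] at this

end GeneralizedPetersen

theorem stmt17_general (n : ℕ) [NeZero n] (hn : 3 ≤ n) (σ : Equiv.Perm (Fin n))
    (hfix : ∀ i, σ i ≠ i)
    (hlen : ∀ c ∈ σ.cycleType, 3 ≤ c) :
    (n + 2) / 2 ≤ hullNumber (GGP n σ) ∧
    ((∀ c ∈ σ.cycleType, Even c) → hullNumber (GGP n σ) = (n + 2) / 2) ∧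
    (∀ k : ℕ, k = Multiset.card (σ.cycleType.filter (fun m => Odd m)) →
      1 ≤ k → hullNumber (GGP n σ) ≤ (n + k) / 2) := by
  classical
  have hσ2 := σ.apply_apply_ne_self hfix hlen
  have hcount : 2 * #σ.evenPositions = n + Multiset.card (σ.cycleType.filter Odd) := by
    rw [σ.two_mul_card_evenPositions hfix, σ.card_oddCycleEnds hfix, Fintype.card_fin]
  have hlower : (n + 2) / 2 ≤ hullNumber (GGP n σ) := by
    have := card_add_two_le_four_mul_hullNumber (GGP_isRegularOfDegree_three hn hfix hσ2)
    rw [Fintype.card_sum, Fintype.card_fin] at this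
    omega
  refine ⟨hlower, fun heven => le_antisymm ?_ hlower, fun k hk hk1 => ?_⟩
  · have hnoodd : σ.cycleType.filter Odd = 0 :=
      Multiset.filter_eq_nil.2 fun c hc => Nat.not_odd_iff_even.2 (heven c hc)
    have := hullNumber_GGP_le_card_evenPositions_add_one (by omega) hfix hσ2
    rw [hnoodd, Multiset.card_zero] at hcount
    omega
  · replace hk : k = Multiset.card (σ.cycleType.filter Odd) := hk
    obtain ⟨e, he⟩ : σ.oddCycleEnds.Nonempty := by
      rw [← card_pos, σ.card_oddCycleEnds hfix]
      omega
    have := hullNumber_GGP_le_card_evenPositions (by omega) hfix hlen he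
    omega

theorem stmt17 (n : ℕ) [NeZero n] (hn : 3 ≤ n) (σ : Equiv.Perm (Fin n))
    (hσ : σ ≠ 1) (hfix : ∀ i, σ i ≠ i)
    (hlen : ∀ c ∈ σ.cycleType, 3 ≤ c) :
    (n + 2) / 2 ≤ hullNumber (GGP n σ) ∧
    ((∀ c ∈ σ.cycleType, Even c) → hullNumber (GGP n σ) = (n + 2) / 2) ∧
    (∀ k : ℕ, k = Multiset.card (σ.cycleType.filter (fun m => Odd m)) →
      1 ≤ k → hullNumber (GGP n σ) ≤ (n + k) / 2) :=
  stmt17_general n hn σ hfix hlen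
end
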